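/- For every y₁ ∈ ℝ and every y₂ > 0 one has the Fourier-mode representation u(y₁,y₂) = Σ_{k∈ℤ} η_k e^{i k y₁ − |k| y₂}, the series converging absolutely. (This is the explicit representation in Z⁺ of the periodic harmonic extension stated in Theorem 3.2.) -/

import Mathlib

open MeasureTheory Real Set

noncomputable section

/-- Partial derivative in the first variable. -/
def pd1 (u : ℝ → ℝ → ℝ) (x y : ℝ) : ℝ := deriv (fun t => u t y) x

/-- Partial derivative in the second variable. -/
def pd2 (u : ℝ → ℝ → ℝ) (x y : ℝ) : ℝ := deriv (fun t => u x t) y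

/-- Laplacian. -/
def lap (u : ℝ → ℝ → ℝ) (x y : ℝ) : ℝ := pd1 (pd1 u) x y + pd2 (pd2 u) x y

/-- Squared modulus of the gradient. -/
def gradSq (u : ℝ → ℝ → ℝ) (x y : ℝ) : ℝ := (pd1 u x y) ^ 2 + (pd2 u x y) ^ 2

/-- `u` is continuous on the closed upper half plane, `2π`-periodic in `y₁`, harmonic in the
open upper half plane and with finite Dirichlet energy over one period. -/
structure UpperHarmonic (u : ℝ → ℝ → ℝ) : Prop where
  cont : ContinuousOn (fun p : ℝ × ℝ => u p.1 p.2) {p : ℝ × ℝ | 0 ≤ p.2}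
  periodic : ∀ y₁ y₂, u (y₁ + 2 * π) y₂ = u y₁ y₂
  smooth : ContDiffOn ℝ 2 (fun p : ℝ × ℝ => u p.1 p.2) {p : ℝ × ℝ | 0 < p.2}
  harmonic : ∀ p : ℝ × ℝ, 0 < p.2 → lap u p.1 p.2 = 0
  energy : IntegrableOn (fun p : ℝ × ℝ => gradSq u p.1 p.2) (Ioo 0 (2 * π) ×ˢ Ioi 0)

/-- Interface Fourier coefficients `η_k = (1/2π) ∫₀^{2π} u(t,0) e^{-ikt} dt`. -/
def interfaceFourierCoeff (u : ℝ → ℝ → ℝ) (k : ℤ) : ℂ :=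
  ((2 * π : ℝ) : ℂ)⁻¹ * ∫ t in (0 : ℝ)..(2 * π),
    (u t 0 : ℂ) * Complex.exp (-Complex.I * (k : ℂ) * (t : ℂ))

/-- The Fourier mode `e^{i k y₁ - |k| y₂}`. -/
def fourierMode (k : ℤ) (y₁ y₂ : ℝ) : ℂ :=
  Complex.exp (Complex.I * (k : ℂ) * (y₁ : ℂ) - ((|k| : ℤ) : ℂ) * (y₂ : ℂ))

/-!
Let `c_k(y)` be the `k`-th Fourier coefficient of the slice `t ↦ u(t, y)`. Integrating by parts in
`t` and using `Δu = 0` gives `c_k'' = k² c_k` for `y > 0`, so `g_k = c_k' + |k| c_k` solves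
`g_k' = |k| g_k` and `‖g_k(y)‖` is nondecreasing. Bessel's inequality for the coefficients of `∂₁u`
and `∂₂u` gives `π ‖g_k(y)‖² ≤ ∫₀^{2π} |∇u(t, y)|² dt`, so finite Dirichlet energy forces `g_k = 0`.
Then `c_k' = -|k| c_k`, and continuity of `u` up to the boundary gives `c_k(y) = η_k e^{-|k| y}`.
These coefficients are summable, so each slice is the pointwise sum of its Fourier series.
-/

open Function Filter Topology

section PartialDerivatives

variable {u : ℝ → ℝ → ℝ} {s : Set (ℝ × ℝ)} {x y : ℝ}

lemma hasDerivAt_fderiv_apply_fst (hu : DifferentiableAt ℝ (fun p : ℝ × ℝ => u p.1 p.2) (x, y)) :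
    HasDerivAt (fun t => u t y) (fderiv ℝ (fun p : ℝ × ℝ => u p.1 p.2) (x, y) (1, 0)) x :=
  HasFDerivAt.comp_hasDerivAt (l := fun p : ℝ × ℝ => u p.1 p.2) x hu.hasFDerivAt
    ((hasDerivAt_id' x).prodMk (hasDerivAt_const x y))

lemma hasDerivAt_fderiv_apply_snd (hu : DifferentiableAt ℝ (fun p : ℝ × ℝ => u p.1 p.2) (x, y)) :
    HasDerivAt (fun r => u x r) (fderiv ℝ (fun p : ℝ × ℝ => u p.1 p.2) (x, y) (0, 1)) y :=
  HasFDerivAt.comp_hasDerivAt (l := fun p : ℝ × ℝ => u p.1 p.2) y hu.hasFDerivAt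
    ((hasDerivAt_const y x).prodMk (hasDerivAt_id' y))

lemma hasDerivAt_pd1 (hu : DifferentiableAt ℝ (fun p : ℝ × ℝ => u p.1 p.2) (x, y)) :
    HasDerivAt (fun t => u t y) (pd1 u x y) x :=
  (hasDerivAt_fderiv_apply_fst hu).differentiableAt.hasDerivAt

lemma hasDerivAt_pd2 (hu : DifferentiableAt ℝ (fun p : ℝ × ℝ => u p.1 p.2) (x, y)) :
    HasDerivAt (fun r => u x r) (pd2 u x y) y :=
  (hasDerivAt_fderiv_apply_snd hu).differentiableAt.hasDerivAt

lemma contDiffOn_pd1 {m n : WithTop ℕ∞} (hs : IsOpen s)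
    (hu : ContDiffOn ℝ n (fun p : ℝ × ℝ => u p.1 p.2) s) (hmn : m + 1 ≤ n) :
    ContDiffOn ℝ m (fun p : ℝ × ℝ => pd1 u p.1 p.2) s :=
  ((hu.fderiv_of_isOpen hs hmn).clm_apply contDiffOn_const).congr fun _ hp =>
    (hasDerivAt_fderiv_apply_fst ((hu.contDiffAt (hs.mem_nhds hp)).differentiableAt
      (zero_lt_one.trans_le (le_add_self.trans hmn)).ne')).deriv

lemma contDiffOn_pd2 {m n : WithTop ℕ∞} (hs : IsOpen s)
    (hu : ContDiffOn ℝ n (fun p : ℝ × ℝ => u p.1 p.2) s) (hmn : m + 1 ≤ n) :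
    ContDiffOn ℝ m (fun p : ℝ × ℝ => pd2 u p.1 p.2) s :=
  ((hu.fderiv_of_isOpen hs hmn).clm_apply contDiffOn_const).congr fun _ hp =>
    (hasDerivAt_fderiv_apply_snd ((hu.contDiffAt (hs.mem_nhds hp)).differentiableAt
      (zero_lt_one.trans_le (le_add_self.trans hmn)).ne')).deriv

lemma periodic_pd1 {c : ℝ} (hu : ∀ y, Periodic (fun t => u t y) c) (y : ℝ) :
    Periodic (fun t => pd1 u t y) c := fun t => by
  simp only [pd1, ← deriv_comp_add_const, (hu y).funext]

end PartialDerivatives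

lemma fourierCoeffOn_two_pi_eq (f : ℝ → ℂ) (k : ℤ) :
    fourierCoeffOn two_pi_pos f k =
      ((2 * π : ℝ) : ℂ)⁻¹ * ∫ t in (0 : ℝ)..(2 * π), f t * Complex.exp (-Complex.I * k * t) := by
  rw [fourierCoeffOn_eq_integral f k two_pi_pos, sub_zero, Complex.real_smul, one_div,
    Complex.ofReal_inv]
  congr 2 with t
  rw [fourier_coe_apply, smul_eq_mul, mul_comm]
  congr 2
  push_cast
  field_simp

lemma AddCircle.liftIoc_coe_of_periodic {B : Type*} {T : ℝ} [Fact (0 < T)] {f : ℝ → B}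
    (hf : Periodic f T) (a x : ℝ) : AddCircle.liftIoc T a f x = f x := by
  simp only [AddCircle.liftIoc, AddCircle.equivIoc, comp_apply, QuotientAddGroup.equivIocMod_coe,
    Set.domRestrict_apply]
  rw [← self_sub_toIocDiv_zsmul, hf.sub_zsmul_eq]

lemma hasSum_fourierCoeffOn_mul_exp {T : ℝ} (hT : 0 < T) {f : ℝ → ℂ} (hf : Continuous f)
    (hper : Periodic f T) (hsum : Summable (fourierCoeffOn hT f)) (x : ℝ) :
    HasSum (fun n : ℤ => fourierCoeffOn hT f n * Complex.exp (2 * π * Complex.I * n * x / T))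
      (f x) := by
  have : Fact (0 < T - 0) := ⟨by simpa using hT⟩
  let F : C(AddCircle (T - 0), ℂ) :=
    ⟨AddCircle.liftIoc (T - 0) 0 f, AddCircle.liftIoc_continuous (by simpa using (hper 0).symm)
      hf.continuousOn⟩
  have hF : ∀ x : ℝ, F x = f x := AddCircle.liftIoc_coe_of_periodic (by simpa using hper) 0
  -- `fourierCoeffOn hT f` is by definition the coefficient sequence of `liftIoc (T - 0) 0 f`.
  have hcoeff : fourierCoeff F = fourierCoeffOn hT f := rfl
  simpa [hF, hcoeff, fourier_coe_apply] using
    has_pointwise_sum_fourier_series_of_summable (f := F) hsum x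

lemma fourierCoeffOn_deriv {a b : ℝ} (hab : a < b) {f f' : ℝ → ℂ}
    (hf : ∀ x ∈ uIcc a b, HasDerivAt f (f' x) x) (hf' : IntervalIntegrable f' volume a b)
    (hfab : f a = f b) (n : ℤ) :
    fourierCoeffOn hab f' n = 2 * π * Complex.I * n / (b - a) * fourierCoeffOn hab f n := by
  rcases eq_or_ne n 0 with rfl | hn
  · simp [fourierCoeffOn_eq_integral, intervalIntegral.integral_eq_sub_of_hasDerivAt hf hf', hfab]
  · rw [fourierCoeffOn_of_hasDerivAt hab hn hf hf', hfab, sub_self, mul_zero, zero_sub]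
    have hba : (b - a : ℂ) ≠ 0 := sub_ne_zero.2 (by exact_mod_cast hab.ne')
    field_simp

lemma norm_fourierCoeffOn_sq_le {a b : ℝ} (hab : a < b) {f : ℝ → ℂ} (hf : Continuous f) (n : ℤ) :
    ‖fourierCoeffOn hab f n‖ ^ 2 ≤ (b - a)⁻¹ * ∫ x in a..b, ‖f x‖ ^ 2 := by
  have hL2 : MemLp f 2 (volume.restrict (Ioc a b)) :=
    (memLp_two_iff_integrable_sq_norm hf.aestronglyMeasurable).2 (hf.norm.pow 2).integrableOn_Ioc
  exact le_hasSum (hasSum_sq_fourierCoeffOn hab hL2) n fun _ _ => by positivity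

lemma ContinuousOn.continuous_slice {E : Type*} [TopologicalSpace E] {f : ℝ × ℝ → E}
    {S : Set ℝ} {y : ℝ} (hf : ContinuousOn f (univ ×ˢ S))
    (hy : y ∈ S) : Continuous fun t => f (t, y) :=
  hf.comp_continuous (continuous_id.prodMk continuous_const) fun _ => ⟨trivial, hy⟩

lemma hasDerivAt_intervalIntegral_of_continuousOn {E : Type*} [NormedAddCommGroup E]
    [NormedSpace ℝ E] {F F' : ℝ → ℝ → E} {S : Set ℝ} {a b y₀ : ℝ} (hS : IsOpen S) (hy₀ : y₀ ∈ S)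
    (hF : ContinuousOn (uncurry F) (univ ×ˢ S)) (hF' : ContinuousOn (uncurry F') (univ ×ˢ S))
    (hd : ∀ t, ∀ y ∈ S, HasDerivAt (F t) (F' t y) y) :
    HasDerivAt (fun y => ∫ t in a..b, F t y) (∫ t in a..b, F' t y₀) y₀ := by
  obtain ⟨ε, hε, hball⟩ := Metric.isOpen_iff.1 hS y₀ hy₀
  have hclosed : Metric.closedBall y₀ (ε / 2) ⊆ S :=
    (Metric.closedBall_subset_ball (half_lt_self hε)).trans hball
  have hK : IsCompact (uIcc a b ×ˢ Metric.closedBall y₀ (ε / 2)) :=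
    isCompact_uIcc.prod (isCompact_closedBall y₀ (ε / 2))
  obtain ⟨C, hC⟩ :=
    hK.exists_bound_of_continuousOn (hF'.mono (prod_mono (subset_univ _) hclosed))
  have hsub : Metric.ball y₀ (ε / 2) ⊆ S := Metric.ball_subset_closedBall.trans hclosed
  refine (intervalIntegral.hasDerivAt_integral_of_dominated_loc_of_deriv_le (F := fun y t => F t y)
    (F' := fun y t => F' t y) (bound := fun _ => C) (Metric.ball_mem_nhds y₀ (half_pos hε))
    ?_ ((hF.continuous_slice hy₀).intervalIntegrable _ _)
    (hF'.continuous_slice hy₀).aestronglyMeasurable ?_ intervalIntegrable_const ?_).2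
  · filter_upwards [hS.mem_nhds hy₀] with y hy using (hF.continuous_slice hy).aestronglyMeasurable
  · exact ae_of_all _ fun t ht y hy =>
      hC (t, y) ⟨uIoc_subset_uIcc ht, Metric.ball_subset_closedBall hy⟩
  · exact ae_of_all _ fun t _ y hy => hd t y (hsub hy)

lemma eq_zero_of_integrableOn_Ioi_of_le {φ : ℝ → ℝ} {b c : ℝ} (hφ : IntegrableOn φ (Ioi b))
    (hc : 0 ≤ c) (h : ∀ y ∈ Ioi b, c ≤ φ y) : c = 0 := by
  have hconst : IntegrableOn (fun _ => c) (Ioi b) :=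
    hφ.mono' aestronglyMeasurable_const <| (ae_restrict_iff' measurableSet_Ioi).2 <|
      ae_of_all _ fun y hy => by rw [Real.norm_of_nonneg hc]; exact h y hy
  simpa using hconst

lemma eq_mul_exp_of_hasDerivAt {G : ℝ → ℂ} {m : ℂ} {S : Set ℝ} (hS : IsOpen S)
    (hS' : IsPreconnected S) (hG : ∀ y ∈ S, HasDerivAt G (m * G y) y) {x y : ℝ} (hx : x ∈ S)
    (hy : y ∈ S) : G y = G x * Complex.exp (m * (y - x)) := by
  have hH : ∀ z ∈ S, HasDerivAt (fun z : ℝ => G z * Complex.exp (-m * z)) 0 z := fun z hz => by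
    have hexp : HasDerivAt (fun z : ℝ => Complex.exp (-m * z)) (-m * Complex.exp (-m * z)) z := by
      simpa [mul_comm] using ((hasDerivAt_id (z : ℂ)).const_mul (-m)).cexp.comp_ofReal
    exact ((hG z hz).mul hexp).congr_deriv (by ring)
  have hconst := hS.is_const_of_deriv_eq_zero hS'
    (fun z hz => (hH z hz).differentiableAt.differentiableWithinAt)
    (fun z hz => (hH z hz).deriv) hy hx
  calc G y = G y * Complex.exp (-m * y) * Complex.exp (m * y) := by
        rw [mul_assoc, ← Complex.exp_add]; simp
    _ = G x * Complex.exp (m * (y - x)) := by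
        rw [hconst, mul_assoc, ← Complex.exp_add]; ring_nf

lemma eq_mul_exp_of_hasDerivAt_of_continuousWithinAt {G : ℝ → ℂ} {m : ℂ}
    (hG : ∀ y ∈ Ioi 0, HasDerivAt G (m * G y) y) (h0 : ContinuousWithinAt G (Ioi 0) 0) {y : ℝ}
    (hy : 0 < y) : G y = G 0 * Complex.exp (m * y) := by
  have hlim : Tendsto G (𝓝[>] 0) (𝓝 (G y * Complex.exp (m * (0 - y)))) := by
    refine Tendsto.congr' (eventually_nhdsWithin_of_forall fun x hx =>
      (eq_mul_exp_of_hasDerivAt isOpen_Ioi isPreconnected_Ioi hG hy hx).symm) ?_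
    have hcont : Continuous fun x : ℝ => G y * Complex.exp (m * (x - y)) := by fun_prop
    exact (hcont.tendsto 0).mono_left nhdsWithin_le_nhds
  rw [tendsto_nhds_unique h0 hlim, mul_assoc, ← Complex.exp_add]
  simp

def sliceCoeff (u : ℝ → ℝ → ℝ) (y : ℝ) (k : ℤ) : ℂ :=
  fourierCoeffOn two_pi_pos (fun t => (u t y : ℂ)) k

section SliceCoeff

variable {u : ℝ → ℝ → ℝ} {S : Set ℝ} {y : ℝ}

lemma continuous_fourier_coe (T : ℝ) (n : ℤ) :
    Continuous fun t : ℝ => fourier n (t : AddCircle T) :=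
  (fourier n).continuous.comp (AddCircle.continuous_mk' T)

lemma interfaceFourierCoeff_eq_sliceCoeff (u : ℝ → ℝ → ℝ) (k : ℤ) :
    interfaceFourierCoeff u k = sliceCoeff u 0 k :=
  (fourierCoeffOn_two_pi_eq _ k).symm

lemma continuousOn_sliceCoeff (hu : ContinuousOn (fun p : ℝ × ℝ => u p.1 p.2) (univ ×ˢ S))
    (k : ℤ) : ContinuousOn (fun y => sliceCoeff u y k) S := by
  rw [continuousOn_iff_continuous_domRestrict]
  simp only [domRestrict_def, sliceCoeff, fourierCoeffOn_eq_integral]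
  refine continuous_const.smul
    (intervalIntegral.continuous_parametric_intervalIntegral_of_continuous' ?_ _ _)
  have hu' : Continuous fun q : S × ℝ => u q.2 q.1 :=
    hu.comp_continuous (continuous_snd.prodMk (continuous_subtype_val.comp continuous_fst))
      fun q => ⟨trivial, q.1.2⟩
  exact ((continuous_fourier_coe _ _).comp continuous_snd).smul
    (Complex.continuous_ofReal.comp hu')

lemma hasDerivAt_sliceCoeff (hS : IsOpen S)
    (hu : ContDiffOn ℝ 1 (fun p : ℝ × ℝ => u p.1 p.2) (univ ×ˢ S)) (hy : y ∈ S) (k : ℤ) :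
    HasDerivAt (fun y => sliceCoeff u y k) (sliceCoeff (pd2 u) y k) y := by
  have hopen : IsOpen ((univ : Set ℝ) ×ˢ S) := isOpen_univ.prod hS
  have hfourier := continuous_fourier_coe (2 * π - 0) (-k)
  have hpd2 := contDiffOn_pd2 (m := 0) hopen hu le_rfl
  simp only [sliceCoeff, fourierCoeffOn_eq_integral]
  refine .const_smul (1 / (2 * π - 0) : ℝ)
    (hasDerivAt_intervalIntegral_of_continuousOn
      (F := fun t y => fourier (-k) (t : AddCircle (2 * π - 0)) • (u t y : ℂ))
      (F' := fun t y => fourier (-k) (t : AddCircle (2 * π - 0)) • (pd2 u t y : ℂ))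
      hS hy ?_ ?_ fun t r hr => ?_)
  · exact (hfourier.comp continuous_fst).continuousOn.smul
      (Complex.continuous_ofReal.comp_continuousOn hu.continuousOn)
  · exact (hfourier.comp continuous_fst).continuousOn.smul
      (Complex.continuous_ofReal.comp_continuousOn hpd2.continuousOn)
  · exact ((hasDerivAt_pd2 ((hu.contDiffAt (hopen.mem_nhds ⟨trivial, hr⟩)).differentiableAt
      one_ne_zero)).ofReal_comp).const_smul (fourier (-k) (t : AddCircle (2 * π - 0)))

lemma sliceCoeff_pd1 (hS : IsOpen S)
    (hu : ContDiffOn ℝ 1 (fun p : ℝ × ℝ => u p.1 p.2) (univ ×ˢ S))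
    (hper : ∀ y, Periodic (fun t => u t y) (2 * π)) (hy : y ∈ S) (k : ℤ) :
    sliceCoeff (pd1 u) y k = Complex.I * k * sliceCoeff u y k := by
  have hopen : IsOpen ((univ : Set ℝ) ×ˢ S) := isOpen_univ.prod hS
  have hpd1 := (contDiffOn_pd1 (m := 0) hopen hu le_rfl).continuousOn.continuous_slice hy
  rw [sliceCoeff, fourierCoeffOn_deriv two_pi_pos (f := fun t => (u t y : ℂ))
    (fun x _ => (hasDerivAt_pd1 ((hu.contDiffAt (hopen.mem_nhds ⟨trivial, hy⟩)).differentiableAt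
      one_ne_zero)).ofReal_comp)
    ((Complex.continuous_ofReal.comp hpd1).intervalIntegrable _ _)
    (by simpa using congrArg Complex.ofReal (hper y 0).symm), sliceCoeff, Complex.ofReal_zero,
    sub_zero]
  push_cast
  field_simp

end SliceCoeff

lemma summable_exp_neg_abs_mul {y : ℝ} (hy : 0 < y) :
    Summable fun k : ℤ => Real.exp (-((|k| : ℤ) : ℝ) * y) := by
  have h : Summable fun n : ℕ => Real.exp (n * -y) := summable_exp_nat_mul_iff.2 (by linarith)
  refine .of_nat_of_neg ?_ ?_ <;> simpa [mul_comm] using h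

lemma norm_fourierMode (k : ℤ) (y₁ y₂ : ℝ) :
    ‖fourierMode k y₁ y₂‖ = Real.exp (-((|k| : ℤ) : ℝ) * y₂) := by
  simp [fourierMode, Complex.norm_exp]

lemma fourierMode_eq_mul (k : ℤ) (y₁ y₂ : ℝ) :
    fourierMode k y₁ y₂ =
      fourierMode k 0 y₂ * Complex.exp (2 * π * Complex.I * k * y₁ / (2 * π : ℝ)) := by
  rw [fourierMode, fourierMode, ← Complex.exp_add]
  congr 1
  field_simp
  push_cast
  ring

def growingPart (u : ℝ → ℝ → ℝ) (k : ℤ) (y : ℝ) : ℂ :=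
  sliceCoeff (pd2 u) y k + ((|k| : ℤ) : ℂ) * sliceCoeff u y k

namespace UpperHarmonic

variable {u : ℝ → ℝ → ℝ} {y : ℝ}

lemma contDiffOn_two (hu : UpperHarmonic u) :
    ContDiffOn ℝ 2 (fun p : ℝ × ℝ => u p.1 p.2) (univ ×ˢ Ioi 0) := by
  rw [univ_prod]
  exact hu.smooth

lemma continuousOn_univ_prod_Ici (hu : UpperHarmonic u) :
    ContinuousOn (fun p : ℝ × ℝ => u p.1 p.2) (univ ×ˢ Ici 0) := by
  rw [univ_prod]
  exact hu.cont

lemma contDiffOn_one (hu : UpperHarmonic u) :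
    ContDiffOn ℝ 1 (fun p : ℝ × ℝ => u p.1 p.2) (univ ×ˢ Ioi 0) :=
  hu.contDiffOn_two.of_le one_le_two

lemma contDiffOn_pd1 (hu : UpperHarmonic u) :
    ContDiffOn ℝ 1 (fun p : ℝ × ℝ => pd1 u p.1 p.2) (univ ×ˢ Ioi 0) :=
  _root_.contDiffOn_pd1 (isOpen_univ.prod isOpen_Ioi) hu.contDiffOn_two (by norm_num)

lemma contDiffOn_pd2 (hu : UpperHarmonic u) :
    ContDiffOn ℝ 1 (fun p : ℝ × ℝ => pd2 u p.1 p.2) (univ ×ˢ Ioi 0) :=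
  _root_.contDiffOn_pd2 (isOpen_univ.prod isOpen_Ioi) hu.contDiffOn_two (by norm_num)

lemma sliceCoeff_pd1 (hu : UpperHarmonic u) (hy : 0 < y) (k : ℤ) :
    sliceCoeff (pd1 u) y k = Complex.I * k * sliceCoeff u y k :=
  _root_.sliceCoeff_pd1 isOpen_Ioi hu.contDiffOn_one (fun y t => hu.periodic t y) hy k

lemma sliceCoeff_pd2_pd2 (hu : UpperHarmonic u) (hy : 0 < y) (k : ℤ) :
    sliceCoeff (pd2 (pd2 u)) y k = k ^ 2 * sliceCoeff u y k := by
  have hlap : (fun t => (pd2 (pd2 u) t y : ℂ)) = fun t => -1 * (pd1 (pd1 u) t y : ℂ) := by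
    funext t
    have h := congrArg Complex.ofReal (hu.harmonic (t, y) hy)
    push_cast [lap] at h ⊢
    linear_combination h
  have hpd1 := _root_.sliceCoeff_pd1 isOpen_Ioi hu.contDiffOn_pd1
    (periodic_pd1 fun y t => hu.periodic t y) hy k
  rw [sliceCoeff, hlap, fourierCoeffOn.const_mul, ← sliceCoeff, hpd1, hu.sliceCoeff_pd1 hy]
  linear_combination -(k : ℂ) ^ 2 * sliceCoeff u y k * Complex.I_sq

lemma hasDerivAt_sliceCoeff (hu : UpperHarmonic u) (hy : 0 < y) (k : ℤ) :
    HasDerivAt (sliceCoeff u · k) (sliceCoeff (pd2 u) y k) y :=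
  _root_.hasDerivAt_sliceCoeff isOpen_Ioi hu.contDiffOn_one hy k

lemma hasDerivAt_growingPart (hu : UpperHarmonic u) (hy : 0 < y) (k : ℤ) :
    HasDerivAt (growingPart u k) (((|k| : ℤ) : ℂ) * growingPart u k y) y := by
  have hd := _root_.hasDerivAt_sliceCoeff isOpen_Ioi hu.contDiffOn_pd2 hy k
  rw [hu.sliceCoeff_pd2_pd2 hy k] at hd
  refine (hd.add ((hu.hasDerivAt_sliceCoeff hy k).const_mul _)).congr_deriv ?_
  have habs : ((|k| : ℤ) : ℂ) ^ 2 = (k : ℂ) ^ 2 := by exact_mod_cast sq_abs k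
  rw [growingPart]
  linear_combination -sliceCoeff u y k * habs

lemma integrableOn_sliceEnergy (hu : UpperHarmonic u) :
    IntegrableOn (fun y => ∫ t in Ioo 0 (2 * π), gradSq u t y) (Ioi 0) := by
  have h := hu.energy
  rw [IntegrableOn, Measure.volume_eq_prod, ← Measure.prod_restrict] at h
  exact h.integral_prod_right

lemma norm_growingPart_sq_le (hu : UpperHarmonic u) (hy : 0 < y) (k : ℤ) :
    ‖growingPart u k y‖ ^ 2 ≤ π⁻¹ * ∫ t in Ioo 0 (2 * π), gradSq u t y := by
  have slice {f : ℝ → ℝ → ℝ} (hf : ContDiffOn ℝ 1 (fun p : ℝ × ℝ => f p.1 p.2) (univ ×ˢ Ioi 0)) :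
      Continuous fun t => (f t y : ℂ) :=
    Complex.continuous_ofReal.comp (hf.continuousOn.continuous_slice hy)
  have h1 : ‖sliceCoeff (pd1 u) y k‖ ^ 2 ≤ _ :=
    norm_fourierCoeffOn_sq_le two_pi_pos (slice hu.contDiffOn_pd1) k
  have h2 : ‖sliceCoeff (pd2 u) y k‖ ^ 2 ≤ _ :=
    norm_fourierCoeffOn_sq_le two_pi_pos (slice hu.contDiffOn_pd2) k
  have habs : ‖((|k| : ℤ) : ℂ) * sliceCoeff u y k‖ = ‖sliceCoeff (pd1 u) y k‖ := by
    simp [hu.sliceCoeff_pd1 hy]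
  have henergy : ∫ t in Ioo 0 (2 * π), gradSq u t y =
      (∫ t in (0)..(2 * π), (pd1 u t y) ^ 2) + ∫ t in (0)..(2 * π), (pd2 u t y) ^ 2 := by
    have hc1 : Continuous fun t => pd1 u t y ^ 2 :=
      (hu.contDiffOn_pd1.continuousOn.continuous_slice hy).pow 2
    have hc2 : Continuous fun t => pd2 u t y ^ 2 :=
      (hu.contDiffOn_pd2.continuousOn.continuous_slice hy).pow 2
    rw [← intervalIntegral.integral_add (hc1.intervalIntegrable _ _) (hc2.intervalIntegrable _ _),
      intervalIntegral.integral_of_le two_pi_pos.le, integral_Ioc_eq_integral_Ioo]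
    rfl
  simp only [Complex.norm_real, Real.norm_eq_abs, sq_abs, sub_zero] at h1 h2
  calc ‖growingPart u k y‖ ^ 2
      ≤ (‖sliceCoeff (pd2 u) y k‖ + ‖sliceCoeff (pd1 u) y k‖) ^ 2 := by
        gcongr
        exact habs ▸ norm_add_le _ _
    _ ≤ 2 * (‖sliceCoeff (pd1 u) y k‖ ^ 2 + ‖sliceCoeff (pd2 u) y k‖ ^ 2) := by
        nlinarith [sq_nonneg (‖sliceCoeff (pd2 u) y k‖ - ‖sliceCoeff (pd1 u) y k‖)]
    _ ≤ 2 * ((2 * π)⁻¹ * ∫ t in (0)..(2 * π), (pd1 u t y) ^ 2) +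
          2 * ((2 * π)⁻¹ * ∫ t in (0)..(2 * π), (pd2 u t y) ^ 2) := by
        linarith
    _ = π⁻¹ * ∫ t in Ioo 0 (2 * π), gradSq u t y := by
        rw [henergy]
        field_simp

lemma growingPart_eq_zero (hu : UpperHarmonic u) (hy : 0 < y) (k : ℤ) : growingPart u k y = 0 := by
  have hgrow : ∀ r ∈ Ioi y, ‖growingPart u k y‖ ≤ ‖growingPart u k r‖ := fun r hr => by
    rw [eq_mul_exp_of_hasDerivAt isOpen_Ioi isPreconnected_Ioi
      (fun z hz => hu.hasDerivAt_growingPart hz k) hy (hy.trans hr), norm_mul, Complex.norm_exp]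
    refine le_mul_of_one_le_right (norm_nonneg _) (Real.one_le_exp ?_)
    have : (0 : ℝ) ≤ |k| := by positivity
    simpa using mul_nonneg this (sub_nonneg.2 (le_of_lt hr))
  have hzero := eq_zero_of_integrableOn_Ioi_of_le
    (hu.integrableOn_sliceEnergy.mono_set (Ioi_subset_Ioi hy.le)) (by positivity)
    fun r hr => calc π * ‖growingPart u k y‖ ^ 2
        ≤ π * ‖growingPart u k r‖ ^ 2 := by gcongr; exact hgrow r hr
      _ ≤ π * (π⁻¹ * ∫ t in Ioo 0 (2 * π), gradSq u t r) := by
        gcongr; exact hu.norm_growingPart_sq_le (hy.trans hr) k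
      _ = ∫ t in Ioo 0 (2 * π), gradSq u t r := by field_simp
  simpa [pi_ne_zero] using hzero

theorem sliceCoeff_eq (hu : UpperHarmonic u) (hy : 0 < y) (k : ℤ) :
    sliceCoeff u y k = interfaceFourierCoeff u k * fourierMode k 0 y := by
  have hG : ∀ y ∈ Ioi 0, HasDerivAt (sliceCoeff u · k) (-((|k| : ℤ) : ℂ) * sliceCoeff u y k) y :=
    fun y hy => by
      have h := hu.growingPart_eq_zero hy k
      rw [growingPart, add_eq_zero_iff_eq_neg] at h
      simpa [h] using hu.hasDerivAt_sliceCoeff hy k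
  have h0 : ContinuousWithinAt (sliceCoeff u · k) (Ioi 0) 0 :=
    (continuousOn_sliceCoeff hu.continuousOn_univ_prod_Ici k 0 (mem_Ici.2 le_rfl)).mono
      Ioi_subset_Ici_self
  rw [eq_mul_exp_of_hasDerivAt_of_continuousWithinAt hG h0 hy,
    interfaceFourierCoeff_eq_sliceCoeff, fourierMode]
  simp

lemma summable_norm_mul_fourierMode (hu : UpperHarmonic u) (y₁ : ℝ) {y₂ : ℝ} (hy₂ : 0 < y₂) :
    Summable fun k => ‖interfaceFourierCoeff u k * fourierMode k y₁ y₂‖ := by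
  have hbdry : Continuous fun t => (u t 0 : ℂ) :=
    Complex.continuous_ofReal.comp
      (hu.continuousOn_univ_prod_Ici.continuous_slice (mem_Ici.2 le_rfl))
  set M := √((2 * π - 0)⁻¹ * ∫ t in (0)..(2 * π), ‖(u t 0 : ℂ)‖ ^ 2)
  have hM (k : ℤ) : ‖interfaceFourierCoeff u k‖ ≤ M := by
    rw [interfaceFourierCoeff_eq_sliceCoeff]
    exact Real.le_sqrt_of_sq_le (norm_fourierCoeffOn_sq_le two_pi_pos hbdry k)
  refine ((summable_exp_neg_abs_mul hy₂).mul_left M).of_nonneg_of_le (fun _ => norm_nonneg _)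
    fun k => ?_
  rw [norm_mul, norm_fourierMode]
  exact mul_le_mul_of_nonneg_right (hM k) (Real.exp_pos _).le

lemma hasSum_mul_fourierMode (hu : UpperHarmonic u) (y₁ : ℝ) {y₂ : ℝ} (hy₂ : 0 < y₂) :
    HasSum (fun k => interfaceFourierCoeff u k * fourierMode k y₁ y₂) (u y₁ y₂) := by
  have hslice : Continuous fun t => (u t y₂ : ℂ) :=
    Complex.continuous_ofReal.comp (hu.contDiffOn_one.continuousOn.continuous_slice hy₂)
  have hsummable : Summable (sliceCoeff u y₂) := by
    rw [funext (hu.sliceCoeff_eq hy₂)]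
    exact (hu.summable_norm_mul_fourierMode 0 hy₂).of_norm
  have h : HasSum
      (fun k => sliceCoeff u y₂ k * Complex.exp (2 * π * Complex.I * k * y₁ / (2 * π : ℝ)))
      (u y₁ y₂) :=
    hasSum_fourierCoeffOn_mul_exp two_pi_pos hslice
      (fun t => congrArg Complex.ofReal (hu.periodic t y₂)) hsummable y₁
  convert h using 2 with k
  rw [hu.sliceCoeff_eq hy₂, fourierMode_eq_mul _ y₁]
  exact (mul_assoc _ _ _).symm

end UpperHarmonic

/-- Explicit Fourier-mode representation of the periodic harmonic extension in `Z⁺`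
(Theorem 3.2): `u(y) = Σ_k η_k e^{i k y₁ - |k| y₂}`, the series converging absolutely. -/
theorem harmonic_extension_fourier_representation
    (u : ℝ → ℝ → ℝ) (hu : UpperHarmonic u) :
    ∀ y₁ y₂ : ℝ, 0 < y₂ →
      Summable (fun k : ℤ => ‖interfaceFourierCoeff u k * fourierMode k y₁ y₂‖) ∧
      (u y₁ y₂ : ℂ) = ∑' k : ℤ, interfaceFourierCoeff u k * fourierMode k y₁ y₂ := by
  intro y₁ y₂ hy₂
  exact ⟨hu.summable_norm_mul_fourierMode y₁ hy₂, (hu.hasSum_mul_fourierMode y₁ hy₂).tsum_eq.symm⟩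

end
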